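/- For the game CSG({1,2,4}) on subdivided stars, appending 3 extra vertices to any branch does not change the Grundy value: for all m ≥ 0, t ≥ 0 and ℓ₁,...,ℓ_t ≥ 0, the Grundy value of S(ℓ₁,...,ℓ_t, m+3) equals the Grundy value of S(ℓ₁,...,ℓ_t, m). -/

import Mathlib

open SimpleGraph

/-- The minimum excludant of a set of naturals. -/
noncomputable def mex (s : Set ℕ) : ℕ := sInf {n | n ∉ s}

/-- The graph induced on a set of vertices is connected. -/
def ConnOn {V : Type*} (G : SimpleGraph V) (s : Set V) : Prop := (G.induce s).Connected

/-- A legal move in the connected subtraction game CSG(L) on the graph `G`: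
from remaining vertex set `s`, remove the (nonempty) connected set `s \ t` whose
cardinality lies in `L`, leaving `t`, which must be empty or induce a connected graph. -/
def CsgMove {V : Type*} [DecidableEq V] (G : SimpleGraph V) (L : Set ℕ)
    (s t : Finset V) : Prop :=
  t ⊆ s ∧ (s \ t).Nonempty ∧ (s \ t).card ∈ L ∧
    ConnOn G (↑(s \ t) : Set V) ∧ (t = ∅ ∨ ConnOn G (↑t : Set V))

/-- The Grundy value of the position with remaining vertex set `s` in the game
CSG(L) played on `G`, defined by the mex recursion over all legal moves. -/
noncomputable def csgGrundy {V : Type*} [DecidableEq V] (G : SimpleGraph V) (L : Set ℕ)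
    (s : Finset V) : ℕ :=
  mex (Set.range fun t : {t : Finset V // CsgMove G L s t} =>
    have : t.1.card < s.card := by
      obtain ⟨x, hx⟩ := t.2.2.1
      rw [Finset.mem_sdiff] at hx
      exact Finset.card_lt_card ((Finset.ssubset_iff_of_subset t.2.1).2 ⟨x, hx.1, hx.2⟩)
    csgGrundy G L t.1)
termination_by s.card
decreasing_by exact this

/-- The subdivided star with `t` branches of lengths `l 0, …, l (t-1)` appended
to a central vertex `none`. -/
def subdividedStar {t : ℕ} (l : Fin t → ℕ) :
    SimpleGraph (Option (Σ i : Fin t, Fin (l i))) :=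
  SimpleGraph.fromRel fun a b =>
    match a, b with
    | none, some ⟨_, j⟩ => (j : ℕ) = 0
    | some ⟨i, j⟩, some ⟨i', j'⟩ => (i : ℕ) = (i' : ℕ) ∧ (j : ℕ) + 1 = (j' : ℕ)
    | _, _ => False

/-- The graph `G` with a path on `k` new vertices appended at the vertex `u`. -/
def appendPath {V : Type*} (G : SimpleGraph V) (u : V) (k : ℕ) :
    SimpleGraph (V ⊕ Fin k) :=
  SimpleGraph.fromRel fun a b =>
    match a, b with
    | Sum.inl x, Sum.inl y => G.Adj x y
    | Sum.inl x, Sum.inr j => x = u ∧ (j : ℕ) = 0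
    | Sum.inr j, Sum.inr j' => (j : ℕ) + 1 = (j' : ℕ)
    | _, _ => False

/-!
Every position reachable from a subdivided star is empty, a path inside one branch, or a smaller
subdivided star around the same centre, since a connected set containing the centre is closed
downwards along every branch. A path with `n` vertices has value `n % 3`. A star with `a` branches
of length `≡ 1` and `b` branches of length `≡ 2 (mod 3)` has value `starValue a b`, given by a
finite table that is 2-periodic in `a` from `2` on and in `b` from `4` on; branches of length
`≡ 0` do not matter. Both formulas are checked against the mex recursion: a move from a star either
shortens one branch by `1`, `2` or `4` vertices, which changes its residue, or removes the centre
together with at most three further vertices, leaving a path or nothing. Appending three vertices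
to a branch keeps its residue, hence the value.
-/

lemma mex_eq_of_forall_lt_mem {S : Set ℕ} {v : ℕ} (hv : v ∉ S) (hlt : ∀ w < v, w ∈ S) :
    mex S = v :=
  le_antisymm (Nat.sInf_le hv) (not_lt.1 fun h => Nat.sInf_mem (s := {n | n ∉ S}) ⟨v, hv⟩ (hlt _ h))

section Game

variable {V : Type*} [DecidableEq V] {G : SimpleGraph V} {L : Set ℕ}

lemma CsgMove.card_lt {s t : Finset V} (h : CsgMove G L s t) : t.card < s.card := by
  obtain ⟨x, hx⟩ := h.2.1
  rw [Finset.mem_sdiff] at hx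
  exact Finset.card_lt_card ((Finset.ssubset_iff_of_subset h.1).2 ⟨x, hx.1, hx.2⟩)

lemma csgMove_of_card_mem (hL : 0 ∉ L) {s u : Finset V} (hsub : u ⊆ s) (hcard : (s \ u).card ∈ L)
    (hR : ConnOn G ↑(s \ u)) (hu : u = ∅ ∨ ConnOn G ↑u) : CsgMove G L s u :=
  ⟨hsub, Finset.card_pos.1 (Nat.pos_of_ne_zero fun h => hL (h ▸ hcard)), hcard, hR, hu⟩

lemma csgMove_empty (hL : 0 ∉ L) {s : Finset V} (hcard : s.card ∈ L) (hs : ConnOn G ↑s) :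
    CsgMove G L s ∅ :=
  csgMove_of_card_mem hL (Finset.empty_subset _) (by rwa [Finset.sdiff_empty])
    (by rwa [Finset.sdiff_empty]) (Or.inl rfl)

theorem csgGrundy_eq_of_forall (P : Finset V → Prop) (f : Finset V → ℕ)
    (hP : ∀ s t, P s → CsgMove G L s t → P t)
    (hne : ∀ s t, P s → CsgMove G L s t → f t ≠ f s)
    (hex : ∀ s, P s → ∀ w < f s, ∃ t, CsgMove G L s t ∧ f t = w) {s : Finset V} (hs : P s) :
    csgGrundy G L s = f s := by
  induction hn : s.card using Nat.strong_induction_on generalizing s with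
  | _ n ih =>
    have hopt : ∀ t : {t // CsgMove G L s t}, csgGrundy G L t.1 = f t.1 := fun t =>
      ih _ (hn ▸ CsgMove.card_lt t.2) (hP s t.1 hs t.2) rfl
    rw [csgGrundy, funext hopt]
    apply mex_eq_of_forall_lt_mem
    · rintro ⟨t, ht⟩
      exact hne s t hs t.2 ht
    · intro w hw
      obtain ⟨t, hmove, rfl⟩ := hex s hs w hw
      exact ⟨⟨t, hmove⟩, rfl⟩

end Game

section Connectivity

variable {V : Type*} {G : SimpleGraph V}

lemma exists_adj_boundary_of_connOn {s A : Set V} (hs : ConnOn G s) {u v : V} (hu : u ∈ s)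
    (hv : v ∈ s) (huA : u ∈ A) (hvA : v ∉ A) :
    ∃ x ∈ s, ∃ y ∈ s, x ∈ A ∧ y ∉ A ∧ G.Adj x y := by
  obtain ⟨p⟩ := hs.preconnected ⟨u, hu⟩ ⟨v, hv⟩
  obtain ⟨d, -, hd, hd'⟩ := p.exists_boundary_dart {x | x.1 ∈ A} huA hvA
  exact ⟨_, d.fst.2, _, d.snd.2, hd, hd', d.adj⟩

lemma connOn_of_exists_adj_lt {s : Set V} {r : V} (hr : r ∈ s) (rank : V → ℕ)
    (h : ∀ v ∈ s, v ≠ r → ∃ w ∈ s, G.Adj v w ∧ rank w < rank v) : ConnOn G s := by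
  have reach : ∀ n, ∀ v (hv : v ∈ s), rank v = n → (G.induce s).Reachable ⟨v, hv⟩ ⟨r, hr⟩ := by
    intro n
    induction n using Nat.strong_induction_on with
    | _ n ih =>
      intro v hv hvn
      by_cases hvr : v = r
      · subst hvr; rfl
      obtain ⟨w, hw, hadj, hlt⟩ := h v hv hvr
      exact (SimpleGraph.Adj.reachable (G := G.induce s) (u := ⟨v, hv⟩) (v := ⟨w, hw⟩) hadj).trans
        (ih _ (hvn ▸ hlt) w hw rfl)
  have : Nonempty s := ⟨⟨r, hr⟩⟩
  exact SimpleGraph.Connected.mk fun u v =>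
    (reach _ u.1 u.2 rfl).trans (reach _ v.1 v.2 rfl).symm

end Connectivity

namespace CsgStar

open Finset

def periodRep (k n : ℕ) : ℕ := if n < k then n else k + (n - k) % 2

lemma periodRep_lt (k n : ℕ) : periodRep k n < k + 2 := by
  unfold periodRep; split_ifs <;> omega

lemma periodRep_periodRep {k j : ℕ} (h : k ≤ j) (n : ℕ) :
    periodRep k (periodRep j n) = periodRep k n := by
  unfold periodRep; split_ifs <;> omega

lemma periodRep_periodRep_add_one {k j : ℕ} (h : k ≤ j) (n : ℕ) :
    periodRep k (periodRep j n + 1) = periodRep k (n + 1) := by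
  unfold periodRep; split_ifs <;> omega

lemma periodRep_periodRep_sub_one {k j : ℕ} (h : k < j) (n : ℕ) :
    periodRep k (periodRep j n - 1) = periodRep k (n - 1) := by
  unfold periodRep; split_ifs <;> omega

lemma periodRep_eq_zero_iff {k : ℕ} (h : 0 < k) (n : ℕ) : periodRep k n = 0 ↔ n = 0 := by
  unfold periodRep; split_ifs <;> omega

lemma periodRep_le_one_iff {k : ℕ} (h : 1 < k) (n : ℕ) : periodRep k n ≤ 1 ↔ n ≤ 1 := by
  unfold periodRep; split_ifs <;> omega

/-- The Grundy value of a star position with `a` branches of length `≡ 1` and `b` branches of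
length `≡ 2 (mod 3)`, for `a < 4` and `b < 6`; `starValue` extends it 2-periodically from
`a = 2` and from `b = 4` on. -/
def starTable : ℕ → ℕ → ℕ
  | 0, 0 => 1 | 0, 1 => 0 | 0, 2 => 2 | 0, 3 => 1 | 0, 4 => 0 | 0, 5 => 2
  | 1, 0 => 2 | 1, 1 => 1 | 1, 2 => 0 | 1, 3 => 2 | 1, 4 => 1 | 1, 5 => 3
  | 2, 0 => 0 | 2, 1 => 2 | 2, 2 => 1 | 2, 3 => 3 | 2, 4 => 0 | 2, 5 => 2
  | 3, 0 => 1 | 3, 1 => 3 | 3, 2 => 0 | 3, 3 => 2 | 3, 4 => 1 | 3, 5 => 3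
  | _, _ => 0

def starValue (a b : ℕ) : ℕ := starTable (periodRep 2 a) (periodRep 4 b)

lemma starValue_periodRep (a b : ℕ) :
    starValue (periodRep 4 a) (periodRep 6 b) = starValue a b := by
  simp only [starValue, periodRep_periodRep (by norm_num : 2 ≤ 4),
    periodRep_periodRep (by norm_num : 4 ≤ 6)]

lemma starValue_succ_left_ne (a b : ℕ) : starValue (a + 1) b ≠ starValue a b := by
  have key : ∀ a < 6, ∀ b < 8, starValue (a + 1) b ≠ starValue a b := by decide
  simpa only [starValue, periodRep_periodRep_add_one (by norm_num : 2 ≤ 4),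
    periodRep_periodRep (by norm_num : 2 ≤ 4), periodRep_periodRep (by norm_num : 4 ≤ 6)]
    using key _ (periodRep_lt 4 a) _ (periodRep_lt 6 b)

lemma starValue_succ_right_ne (a b : ℕ) : starValue a (b + 1) ≠ starValue a b := by
  have key : ∀ a < 6, ∀ b < 8, starValue a (b + 1) ≠ starValue a b := by decide
  simpa only [starValue, periodRep_periodRep_add_one (by norm_num : 4 ≤ 6),
    periodRep_periodRep (by norm_num : 2 ≤ 4), periodRep_periodRep (by norm_num : 4 ≤ 6)]
    using key _ (periodRep_lt 4 a) _ (periodRep_lt 6 b)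

lemma starValue_succ_left_ne_succ_right (a b : ℕ) :
    starValue (a + 1) b ≠ starValue a (b + 1) := by
  have key : ∀ a < 6, ∀ b < 8, starValue (a + 1) b ≠ starValue a (b + 1) := by decide
  simpa only [starValue, periodRep_periodRep_add_one (by norm_num : 2 ≤ 4),
    periodRep_periodRep_add_one (by norm_num : 4 ≤ 6),
    periodRep_periodRep (by norm_num : 2 ≤ 4), periodRep_periodRep (by norm_num : 4 ≤ 6)]
    using key _ (periodRep_lt 4 a) _ (periodRep_lt 6 b)

/-- Shortening a branch by 1 or 2 moves it from residue `1` to `0`, from `2` to `1` or `0`, or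
from `0` (if it is nonempty, recorded by `z`) to `2` or `1`. In the last case the position is
removed entirely, or a branch of residue `1` is shortened by 2. -/
lemma exists_starValue_eq_of_lt {a b w : ℕ} (z : Bool) (hw : w < starValue a b) :
    (a ≠ 0 ∧ w = starValue (a - 1) b) ∨ (b ≠ 0 ∧ w = starValue (a + 1) (b - 1)) ∨
    (b ≠ 0 ∧ w = starValue a (b - 1)) ∨ (z ∧ w = starValue a (b + 1)) ∨
    (z ∧ w = starValue (a + 1) b) ∨ (a ≤ 1 ∧ b = 0 ∧ z = false ∧ w = 0) := by
  have key : ∀ z : Bool, ∀ a ∈ range 6, ∀ b ∈ range 8, ∀ w ∈ range (starValue a b),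
      (a ≠ 0 ∧ w = starValue (a - 1) b) ∨ (b ≠ 0 ∧ w = starValue (a + 1) (b - 1)) ∨
      (b ≠ 0 ∧ w = starValue a (b - 1)) ∨ (z ∧ w = starValue a (b + 1)) ∨
      (z ∧ w = starValue (a + 1) b) ∨ (a ≤ 1 ∧ b = 0 ∧ z = false ∧ w = 0) := by
    decide
  simpa only [starValue, periodRep_periodRep_add_one (by norm_num : 2 ≤ 4),
    periodRep_periodRep_add_one (by norm_num : 4 ≤ 6),
    periodRep_periodRep_sub_one (by norm_num : 2 < 4),
    periodRep_periodRep_sub_one (by norm_num : 4 < 6),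
    periodRep_periodRep (by norm_num : 2 ≤ 4), periodRep_periodRep (by norm_num : 4 ≤ 6),
    ne_eq, periodRep_eq_zero_iff (by norm_num : 0 < 4), periodRep_eq_zero_iff (by norm_num : 0 < 6),
    periodRep_le_one_iff (by norm_num : 1 < 4)]
    using key z _ (mem_range.2 (periodRep_lt 4 a)) _ (mem_range.2 (periodRep_lt 6 b)) w
      (mem_range.2 (by rwa [starValue_periodRep]))

lemma starValue_ne_of_residue_ne {r r' : ℕ} (hr : r < 3) (hr' : r' < 3) (h : r ≠ r')
    (a b : ℕ) :
    starValue (a + if r = 1 then 1 else 0) (b + if r = 2 then 1 else 0) ≠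
      starValue (a + if r' = 1 then 1 else 0) (b + if r' = 2 then 1 else 0) := by
  interval_cases r <;> interval_cases r' <;> simp only [ne_eq, not_true_eq_false] at h ⊢ <;>
    norm_num
  · exact (starValue_succ_left_ne a b).symm
  · exact (starValue_succ_right_ne a b).symm
  · exact starValue_succ_left_ne a b
  · exact starValue_succ_left_ne_succ_right a b
  · exact starValue_succ_right_ne a b
  · exact (starValue_succ_left_ne_succ_right a b).symm

/-- `a` and `b` are the numbers of branches of residue `1` and `2` among all branches but one, `S`
is the total length of those branches and `c` the length of the remaining one: removing the centre,
those branches and `p` vertices of the remaining branch leaves a path of value `(c - p) % 3`. -/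
lemma starValue_ne_of_small_remainder {a b S p c : ℕ} (hS : a + 2 * b ≤ S)
    (hmod : S % 3 = (a + 2 * b) % 3) (hsize : 1 + S + p ∈ ({1, 2, 4} : Set ℕ))
    (hpc : p ≤ c) :
    starValue (a + if c % 3 = 1 then 1 else 0) (b + if c % 3 = 2 then 1 else 0) ≠
      (c - p) % 3 := by
  have key : ∀ a ∈ range 4, ∀ b ∈ range 2, ∀ S ∈ range 4, ∀ p ∈ range 4, ∀ r ∈ range 3,
      ¬(a + 2 * b ≤ S ∧ S % 3 = (a + 2 * b) % 3 ∧
        (1 + S + p = 1 ∨ 1 + S + p = 2 ∨ 1 + S + p = 4)) ∨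
      starValue (a + if r = 1 then 1 else 0) (b + if r = 2 then 1 else 0) ≠ (r + 3 - p) % 3 := by
    decide
  simp only [Set.mem_insert_iff, Set.mem_singleton_iff] at hsize
  rw [show (c - p) % 3 = (c % 3 + 3 - p) % 3 by omega]
  exact (key a (mem_range.2 (by omega)) b (mem_range.2 (by omega)) S (mem_range.2 (by omega)) p
    (mem_range.2 (by omega)) (c % 3) (mem_range.2 (by omega))).resolve_left
    (not_not_intro ⟨hS, hmod, hsize⟩)

section Residue

variable {ι : Type*} (A : Finset ι) (c : ι → ℕ)

def residueCount (r : ℕ) : ℕ := #(A.filter fun i => c i % 3 = r)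

lemma sum_mod_three_eq : ∑ i ∈ A, c i % 3 = residueCount A c 1 + 2 * residueCount A c 2 := by
  rw [residueCount, residueCount, card_filter, card_filter, mul_sum, ← sum_add_distrib]
  refine sum_congr rfl fun i _ => ?_
  split_ifs <;> omega

lemma residueCount_add_le_sum : residueCount A c 1 + 2 * residueCount A c 2 ≤ ∑ i ∈ A, c i :=
  sum_mod_three_eq A c ▸ sum_le_sum fun _ _ => Nat.mod_le _ _

lemma sum_mod_three : (∑ i ∈ A, c i) % 3 = (residueCount A c 1 + 2 * residueCount A c 2) % 3 := by
  rw [← sum_mod_three_eq, sum_nat_mod]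

variable {A c}

lemma residueCount_eq_erase_add [DecidableEq ι] {i : ι} (hi : i ∈ A) (r : ℕ) :
    residueCount A c r = residueCount (A.erase i) c r + if c i % 3 = r then 1 else 0 := by
  rw [residueCount, residueCount, card_filter, card_filter, ← add_sum_erase A _ hi, add_comm]

lemma residueCount_congr {c' : ι → ℕ} (h : ∀ i ∈ A, c i = c' i) (r : ℕ) :
    residueCount A c r = residueCount A c' r := by
  rw [residueCount, residueCount, filter_congr fun i hi => by rw [h i hi]]

lemma exists_mod_three_eq_of_residueCount_ne_zero {r : ℕ} (h : residueCount A c r ≠ 0) :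
    ∃ i ∈ A, c i % 3 = r := by
  obtain ⟨i, hi⟩ := card_ne_zero.1 h
  exact ⟨i, (mem_filter.1 hi).1, (mem_filter.1 hi).2⟩

lemma residueCount_pos {i : ι} (hi : i ∈ A) {r : ℕ} (h : c i % 3 = r) : 0 < residueCount A c r :=
  card_pos.2 ⟨i, mem_filter.2 ⟨hi, h⟩⟩

end Residue

variable {t : ℕ} {l : Fin t → ℕ}

abbrev StarVertex (l : Fin t → ℕ) := Option (Σ i : Fin t, Fin (l i))

lemma adj_some_iff {i : Fin t} {j : Fin (l i)} {v : StarVertex l} :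
    (subdividedStar l).Adj (some ⟨i, j⟩) v ↔
      (v = none ∧ (j : ℕ) = 0) ∨
        ∃ j' : Fin (l i), v = some ⟨i, j'⟩ ∧ ((j' : ℕ) + 1 = j ∨ (j : ℕ) + 1 = j') := by
  rcases v with _ | ⟨i', j'⟩
  · simp [subdividedStar]
  · rcases eq_or_ne i' i with rfl | hi
    · simp only [subdividedStar, SimpleGraph.fromRel_adj, ne_eq, Option.some.injEq,
        Sigma.mk.injEq, heq_eq_eq, true_and, exists_eq_left', reduceCtorEq, false_and, false_or]
      omega
    · have hv : (i : ℕ) ≠ i' := fun h => hi (Fin.ext h).symm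
      simp [subdividedStar, hi, hv, Ne.symm hv]

def branchDepths (s : Finset (StarVertex l)) (i : Fin t) : Finset ℕ :=
  (univ.filter fun j : Fin (l i) => some ⟨i, j⟩ ∈ s).image Fin.val

def branchLen (s : Finset (StarVertex l)) (i : Fin t) : ℕ := (branchDepths s i).card

variable {s u : Finset (StarVertex l)} {i : Fin t}

lemma mem_branchDepths {m : ℕ} :
    m ∈ branchDepths s i ↔ ∃ j : Fin (l i), (j : ℕ) = m ∧ some ⟨i, j⟩ ∈ s := by
  simp [branchDepths, and_comm]

lemma some_mem_iff {j : Fin (l i)} : some ⟨i, j⟩ ∈ s ↔ (j : ℕ) ∈ branchDepths s i := by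
  simp [mem_branchDepths, Fin.val_inj]

lemma eq_of_branchDepths_eq (hn : none ∈ s ↔ none ∈ u)
    (h : ∀ i, branchDepths s i = branchDepths u i) : s = u := by
  ext (_ | ⟨i, j⟩)
  · exact hn
  · rw [some_mem_iff, some_mem_iff, h]

lemma branchDepths_mono (h : u ⊆ s) (i : Fin t) : branchDepths u i ⊆ branchDepths s i :=
  image_subset_image fun j hj => by simp only [mem_filter, mem_univ, true_and] at hj ⊢; exact h hj

lemma branchDepths_sdiff (i : Fin t) :
    branchDepths (s \ u) i = branchDepths s i \ branchDepths u i := by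
  ext m
  simp only [mem_sdiff, mem_branchDepths]
  constructor
  · rintro ⟨j, rfl, hs, hu⟩
    exact ⟨⟨j, rfl, hs⟩, fun ⟨j', hj', hu'⟩ => hu (Fin.ext hj' ▸ hu')⟩
  · rintro ⟨⟨j, rfl, hs⟩, hu⟩
    exact ⟨j, rfl, hs, fun hu' => hu ⟨j, rfl, hu'⟩⟩

lemma card_eq_add_sum_branchLen (s : Finset (StarVertex l)) :
    s.card = (if none ∈ s then 1 else 0) + ∑ i, branchLen s i := by
  rw [card_eq_sum_card_fiberwise (f := Option.map Sigma.fst) (t := univ)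
    (fun _ _ => mem_univ _), Fintype.sum_option]
  congr 1
  · rw [filter_congr (q := (· = none)) (fun v _ => Option.map_eq_none_iff)]
    split_ifs with h
    · exact card_eq_one.2 ⟨none, by ext v; simp only [mem_filter, mem_singleton]; aesop⟩
    · simpa using h
  · refine sum_congr rfl fun i _ => ?_
    rw [branchLen, branchDepths, card_image_of_injective _ Fin.val_injective,
      ← card_image_of_injective _ (fun j j' h => by simpa using h : Function.Injective
        fun j : Fin (l i) => (some ⟨i, j⟩ : StarVertex l))]
    congr 1
    ext (_ | ⟨i', j⟩)
    · simp
    · rcases eq_or_ne i i' with rfl | hi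
      · simp [and_comm]
      · simp [hi, Ne.symm hi]

def BranchClosed (s : Finset (StarVertex l)) : Prop :=
  ∀ i, IsLowerSet (↑(branchDepths s i) : Set ℕ)

lemma BranchClosed.branchDepths_eq (h : BranchClosed s) (i : Fin t) :
    branchDepths s i = range (branchLen s i) := by
  rcases (h i).eq_univ_or_Iio with huniv | ⟨a, ha⟩
  · exact absurd (huniv ▸ (branchDepths s i).finite_toSet) Set.infinite_univ
  · have hs : branchDepths s i = range a := coe_injective (by rw [ha, coe_range])
    rw [branchLen, hs, card_range]

lemma BranchClosed.mem_branchDepths_iff (h : BranchClosed s) {m : ℕ} :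
    m ∈ branchDepths s i ↔ m < branchLen s i := by
  rw [h.branchDepths_eq, mem_range]

lemma mem_branchDepths_of_connOn (hs : ConnOn (subdividedStar l) ↑s) {j k : ℕ}
    (hj : j ∈ branchDepths s i) (hk : k < j) {v : StarVertex l} (hv : v ∈ s)
    (hvk : ∀ j' : Fin (l i), v = some ⟨i, j'⟩ → (j' : ℕ) ≤ k) : k ∈ branchDepths s i := by
  obtain ⟨j, rfl, hjs⟩ := mem_branchDepths.1 hj
  obtain ⟨x, -, y, hy, ⟨x', hx, hkx⟩, hyA, hxy⟩ := exists_adj_boundary_of_connOn hs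
    (A := {v | ∃ j' : Fin (l i), v = some ⟨i, j'⟩ ∧ k < j'}) hjs hv ⟨j, rfl, hk⟩
    fun ⟨j', hv', hk'⟩ => (hvk j' hv').not_gt hk'
  subst hx
  rcases adj_some_iff.1 hxy with ⟨-, h0⟩ | ⟨j', rfl, hj' | hj'⟩
  · omega
  · exact mem_branchDepths.2 ⟨j', by by_contra; exact hyA ⟨j', rfl, by omega⟩, hy⟩
  · exact absurd ⟨j', rfl, by omega⟩ hyA

lemma none_mem_of_connOn (hs : ConnOn (subdividedStar l) ↑s) {j : ℕ} (hj : j ∈ branchDepths s i)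
    {v : StarVertex l} (hv : v ∈ s) (hvi : ∀ j' : Fin (l i), v ≠ some ⟨i, j'⟩) : none ∈ s := by
  obtain ⟨j, rfl, hjs⟩ := mem_branchDepths.1 hj
  obtain ⟨x, -, y, hy, ⟨x', hx⟩, hyA, hxy⟩ := exists_adj_boundary_of_connOn hs
    (A := {v | ∃ j' : Fin (l i), v = some ⟨i, j'⟩}) hjs hv ⟨j, rfl⟩ fun ⟨j', hv'⟩ => hvi j' hv'
  subst hx
  rcases adj_some_iff.1 hxy with ⟨rfl, -⟩ | ⟨j', rfl, -⟩
  · exact hy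
  · exact absurd ⟨j', rfl⟩ hyA

lemma branchClosed_of_connOn (hs : ConnOn (subdividedStar l) ↑s) (hc : none ∈ s) :
    BranchClosed s := by
  intro i k j hkj hj
  rcases hkj.lt_or_eq with hlt | rfl
  · exact mem_branchDepths_of_connOn hs hj hlt hc (by simp)
  · exact hj

lemma BranchClosed.connOn (h : BranchClosed s) (hc : none ∈ s) :
    ConnOn (subdividedStar l) ↑s := by
  refine connOn_of_exists_adj_lt hc (fun v => v.elim 0 fun x => x.2 + 1) ?_
  rintro (_ | ⟨i, j⟩) hv hne
  · exact absurd rfl hne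
  rcases Nat.eq_zero_or_pos (j : ℕ) with hj | hj
  · exact ⟨none, hc, adj_some_iff.2 (Or.inl ⟨rfl, hj⟩), by simp⟩
  · refine ⟨some ⟨i, ⟨j - 1, by omega⟩⟩, ?_, adj_some_iff.2 (Or.inr ⟨_, rfl, Or.inl ?_⟩), ?_⟩
    · rw [mem_coe, some_mem_iff]
      exact h i (show (j : ℕ) - 1 ≤ j by omega) (some_mem_iff.1 hv)
    · simp only; omega
    · simp only [Option.elim]; omega

def IsBranchInterval (s : Finset (StarVertex l)) (i : Fin t) (a b : ℕ) : Prop :=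
  none ∉ s ∧ branchDepths s i = Ico a b ∧ ∀ i' ≠ i, branchDepths s i' = ∅

namespace IsBranchInterval

variable {a b : ℕ}

lemma eq (hs : IsBranchInterval s i a b) (hu : IsBranchInterval u i a b) : s = u := by
  refine eq_of_branchDepths_eq (iff_of_false hs.1 hu.1) fun i' => ?_
  rcases eq_or_ne i' i with rfl | hi
  · rw [hs.2.1, hu.2.1]
  · rw [hs.2.2 i' hi, hu.2.2 i' hi]

lemma card_eq (hs : IsBranchInterval s i a b) : s.card = b - a := by
  rw [card_eq_add_sum_branchLen, if_neg hs.1, zero_add,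
    sum_eq_single i (fun i' _ hi => by rw [branchLen, hs.2.2 i' hi, card_empty]) (by simp),
    branchLen, hs.2.1, Nat.card_Ico]

lemma connOn (hs : IsBranchInterval s i a b) (hab : a < b) :
    ConnOn (subdividedStar l) ↑s := by
  obtain ⟨ja, rfl, hja⟩ := mem_branchDepths.1 (hs.2.1 ▸ left_mem_Ico.2 hab)
  refine connOn_of_exists_adj_lt hja (fun v => v.elim 0 fun x => x.2) ?_
  rintro (_ | ⟨i', j⟩) hv hne
  · exact absurd hv hs.1
  obtain rfl : i' = i := by
    by_contra hi
    simpa [hs.2.2 i' hi] using some_mem_iff.1 hv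
  have hj : (j : ℕ) ∈ Ico (ja : ℕ) b := hs.2.1 ▸ some_mem_iff.1 hv
  have hja' : (ja : ℕ) < j := by
    rw [mem_Ico] at hj
    exact lt_of_le_of_ne hj.1 fun h => hne (by rw [Fin.ext h])
  refine ⟨some ⟨i', ⟨j - 1, by omega⟩⟩, ?_, adj_some_iff.2 (Or.inr ⟨_, rfl, Or.inl ?_⟩), ?_⟩
  · rw [mem_coe, some_mem_iff, hs.2.1, mem_Ico]
    rw [mem_Ico] at hj
    simp only; omega
  · simp only; omega
  · simp only [Option.elim]; omega

end IsBranchInterval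

lemma exists_isBranchInterval_of_connOn (hs : ConnOn (subdividedStar l) ↑s) (hn : none ∉ s) :
    ∃ i a b, a < b ∧ IsBranchInterval s i a b := by
  obtain ⟨⟨(_ | ⟨i, j⟩), hv⟩⟩ := hs.nonempty
  · exact absurd hv hn
  have hD : (branchDepths s i).Nonempty := ⟨j, some_mem_iff.1 hv⟩
  set a := (branchDepths s i).min' hD
  set b := (branchDepths s i).max' hD
  have ha := min'_mem _ hD
  refine ⟨i, a, b + 1, Nat.lt_succ_of_le (min'_le_max' _ hD), hn, ?_, ?_⟩
  · ext m
    rw [mem_Ico]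
    refine ⟨fun hm => ⟨min'_le _ _ hm, Nat.lt_succ_of_le (le_max' _ _ hm)⟩, fun ⟨ham, hmb⟩ => ?_⟩
    rcases (Nat.le_of_lt_succ hmb).lt_or_eq with hlt | rfl
    · obtain ⟨ja, hja, hjas⟩ := mem_branchDepths.1 ha
      exact mem_branchDepths_of_connOn hs (max'_mem _ hD) hlt hjas fun j' h => by
        simp only [Option.some.injEq, Sigma.mk.injEq, heq_eq_eq, true_and] at h
        omega
    · exact max'_mem _ hD
  · intro i' hi
    rw [eq_empty_iff_forall_notMem]
    intro m hm
    obtain ⟨j', -, hj's⟩ := mem_branchDepths.1 hm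
    exact hn (none_mem_of_connOn hs (some_mem_iff.1 hv) hj's fun j'' h =>
      hi (Sigma.mk.inj_iff.1 (Option.some.inj h)).1)

def trim (s : Finset (StarVertex l)) (i : Fin t) (a : ℕ) : Finset (StarVertex l) :=
  s.filter fun v => ∀ x ∈ v, x.1 = i → (x.2 : ℕ) < a

def tail (s : Finset (StarVertex l)) (i : Fin t) (a : ℕ) : Finset (StarVertex l) :=
  s \ trim s i a

section Trim

variable {a : ℕ}

lemma trim_subset : trim s i a ⊆ s := filter_subset _ _

lemma none_mem_trim : none ∈ trim s i a ↔ none ∈ s := by simp [trim]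

lemma none_notMem_tail : none ∉ tail s i a := by simp [tail, trim]

lemma branchDepths_trim_self :
    branchDepths (trim s i a) i = (branchDepths s i).filter (· < a) := by
  ext m
  simp only [mem_filter, mem_branchDepths, trim]
  aesop

lemma branchDepths_trim_of_ne {i' : Fin t} (hi : i' ≠ i) :
    branchDepths (trim s i a) i' = branchDepths s i' := by
  ext m
  simp only [mem_branchDepths, trim, mem_filter]
  aesop

lemma branchDepths_tail_self :
    branchDepths (tail s i a) i = (branchDepths s i).filter (a ≤ ·) := by
  ext m
  rw [tail, branchDepths_sdiff, branchDepths_trim_self]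
  simp only [mem_sdiff, mem_filter, not_and, not_lt]
  tauto

lemma branchDepths_tail_of_ne {i' : Fin t} (hi : i' ≠ i) : branchDepths (tail s i a) i' = ∅ := by
  rw [tail, branchDepths_sdiff, branchDepths_trim_of_ne hi, sdiff_self, bot_eq_empty]

lemma BranchClosed.trim (h : BranchClosed s) : BranchClosed (trim s i a) := by
  intro i'
  rcases eq_or_ne i' i with rfl | hi
  · rw [branchDepths_trim_self, coe_filter]
    exact (h i').inter fun _ _ hle hlt => lt_of_le_of_lt hle hlt
  · rw [branchDepths_trim_of_ne hi]
    exact h i'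

lemma branchLen_trim_self (h : BranchClosed s) (ha : a ≤ branchLen s i) :
    branchLen (trim s i a) i = a := by
  have : (range (branchLen s i)).filter (· < a) = range a := by
    ext m
    simp only [mem_filter, mem_range]
    omega
  rw [branchLen, branchDepths_trim_self, h.branchDepths_eq, this, card_range]

lemma branchLen_trim_of_ne {i' : Fin t} (hi : i' ≠ i) :
    branchLen (trim s i a) i' = branchLen s i' := by
  rw [branchLen, branchDepths_trim_of_ne hi, branchLen]

lemma BranchClosed.isBranchInterval_tail (h : BranchClosed s) :
    IsBranchInterval (tail s i a) i a (branchLen s i) := by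
  refine ⟨none_notMem_tail, ?_, fun i' hi => branchDepths_tail_of_ne hi⟩
  ext m
  rw [branchDepths_tail_self, mem_filter, h.mem_branchDepths_iff, mem_Ico, and_comm]

lemma IsBranchInterval.trim {b m : ℕ} (hs : IsBranchInterval s i a b) (hm : m ≤ b) :
    IsBranchInterval (trim s i m) i a m := by
  refine ⟨fun h => hs.1 (none_mem_trim.1 h), ?_, fun i' hi => ?_⟩
  · ext k
    rw [branchDepths_trim_self, hs.2.1, mem_filter, mem_Ico, mem_Ico]
    omega
  · rw [branchDepths_trim_of_ne hi, hs.2.2 i' hi]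

lemma IsBranchInterval.tail {b m : ℕ} (hs : IsBranchInterval s i a b) (hm : a ≤ m) :
    IsBranchInterval (tail s i m) i m b := by
  refine ⟨none_notMem_tail, ?_, fun i' hi => branchDepths_tail_of_ne hi⟩
  ext k
  rw [branchDepths_tail_self, hs.2.1, mem_filter, mem_Ico, mem_Ico]
  omega

end Trim

def grundyFormula (s : Finset (StarVertex l)) : ℕ :=
  if none ∈ s then starValue (residueCount univ (branchLen s) 1) (residueCount univ (branchLen s) 2)
  else s.card % 3

lemma grundyFormula_eq_of_erase (hc : none ∈ s) (i : Fin t) :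
    grundyFormula s =
      starValue
        (residueCount (univ.erase i) (branchLen s) 1 + if branchLen s i % 3 = 1 then 1 else 0)
        (residueCount (univ.erase i) (branchLen s) 2 + if branchLen s i % 3 = 2 then 1 else 0) := by
  rw [grundyFormula, if_pos hc, residueCount_eq_erase_add (mem_univ i),
    residueCount_eq_erase_add (mem_univ i)]

lemma grundyFormula_trim (hc : none ∈ s) (hcl : BranchClosed s) {a : ℕ} (ha : a ≤ branchLen s i) :
    grundyFormula (trim s i a) =
      starValue (residueCount (univ.erase i) (branchLen s) 1 + if a % 3 = 1 then 1 else 0)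
        (residueCount (univ.erase i) (branchLen s) 2 + if a % 3 = 2 then 1 else 0) := by
  have hother : ∀ r, residueCount (univ.erase i) (branchLen (trim s i a)) r =
      residueCount (univ.erase i) (branchLen s) r :=
    residueCount_congr fun i' hi' => branchLen_trim_of_ne (ne_of_mem_erase hi')
  rw [grundyFormula_eq_of_erase (none_mem_trim.2 hc) i, hother, hother,
    branchLen_trim_self hcl ha]

lemma grundyFormula_of_none_notMem (hn : none ∉ s) : grundyFormula s = s.card % 3 := if_neg hn

lemma grundyFormula_empty : grundyFormula (∅ : Finset (StarVertex l)) = 0 := rfl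

lemma eq_branchLen_of_isBranchInterval (hcl : BranchClosed s) (hu : u ⊆ s)
    (hcl' : BranchClosed (s \ u)) {a b : ℕ} (hI : IsBranchInterval u i a b) (hab : a < b) :
    b = branchLen s i := by
  have hlast : b - 1 ∈ branchDepths u i := hI.2.1 ▸ mem_Ico.2 ⟨by omega, by omega⟩
  have hle : b ≤ branchLen s i :=
    Nat.le_of_pred_lt (hcl.mem_branchDepths_iff.1 (branchDepths_mono hu i hlast))
  by_contra hne
  have hb : b ∈ branchDepths (s \ u) i := by
    rw [branchDepths_sdiff, mem_sdiff, hcl.mem_branchDepths_iff, hI.2.1, mem_Ico]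
    omega
  have : b - 1 ∈ branchDepths (s \ u) i := hcl' i (show b - 1 ≤ b by omega) hb
  rw [branchDepths_sdiff, mem_sdiff] at this
  exact this.2 hlast

lemma card_eq_of_none_mem (hc : none ∈ s) (i : Fin t) :
    s.card = 1 + ∑ j ∈ univ.erase i, branchLen s j + branchLen s i := by
  rw [card_eq_add_sum_branchLen, if_pos hc, ← add_sum_erase _ _ (mem_univ i)]
  ring

lemma csgMove_cases_of_none_mem (hc : none ∈ s) (hcl : BranchClosed s)
    (hm : CsgMove (subdividedStar l) {1, 2, 4} s u) :
    (∃ i a, a < branchLen s i ∧ branchLen s i - a ∈ ({1, 2, 4} : Set ℕ) ∧ u = trim s i a) ∨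
    (∃ i a, a ≤ branchLen s i ∧
      1 + ∑ j ∈ univ.erase i, branchLen s j + a ∈ ({1, 2, 4} : Set ℕ) ∧ u = tail s i a) ∨
    (u = ∅ ∧ s.card ∈ ({1, 2, 4} : Set ℕ)) := by
  obtain ⟨hsub, -, hcard, hR, hu⟩ := hm
  by_cases hnu : none ∈ u
  · obtain ⟨i, a, b, hab, hI⟩ :=
      exists_isBranchInterval_of_connOn hR fun h => (mem_sdiff.1 h).2 hnu
    have hucl := branchClosed_of_connOn (hu.resolve_left (ne_empty_of_mem hnu)) hnu
    obtain rfl := eq_branchLen_of_isBranchInterval hcl sdiff_subset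
      (by rwa [Finset.sdiff_sdiff_eq_self hsub]) hI hab
    refine Or.inl ⟨i, a, hab, hI.card_eq ▸ hcard, ?_⟩
    refine eq_of_branchDepths_eq (iff_of_true hnu (none_mem_trim.2 hc)) fun i' => ?_
    rw [← Finset.sdiff_sdiff_eq_self hsub, branchDepths_sdiff]
    rcases eq_or_ne i' i with rfl | hi
    · ext m
      rw [hI.2.1, branchDepths_trim_self, mem_sdiff, mem_filter, hcl.mem_branchDepths_iff,
        mem_Ico]
      omega
    · rw [hI.2.2 i' hi, sdiff_empty, branchDepths_trim_of_ne hi]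
  by_cases hu0 : u = ∅
  · exact Or.inr (Or.inr ⟨hu0, by rwa [hu0, sdiff_empty] at hcard⟩)
  obtain ⟨i, a, b, hab, hI⟩ := exists_isBranchInterval_of_connOn (hu.resolve_left hu0) hnu
  have hRcl := branchClosed_of_connOn hR (mem_sdiff.2 ⟨hc, hnu⟩)
  obtain rfl := eq_branchLen_of_isBranchInterval hcl hsub hRcl hI hab
  refine Or.inr (Or.inl ⟨i, a, hab.le, ?_, hI.eq hcl.isBranchInterval_tail⟩)
  rw [card_sdiff_of_subset hsub, hI.card_eq, card_eq_of_none_mem hc i] at hcard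
  have hle := hab.le
  rwa [show ∀ x : ℕ, x + branchLen s i - (branchLen s i - a) = x + a by omega] at hcard

lemma grundyFormula_ne_of_none_mem (hc : none ∈ s) (hcl : BranchClosed s)
    (hm : CsgMove (subdividedStar l) {1, 2, 4} s u) : grundyFormula u ≠ grundyFormula s := by
  rcases csgMove_cases_of_none_mem hc hcl hm with
    ⟨i, a, ha, hd, rfl⟩ | ⟨i, a, ha, hsize, rfl⟩ | ⟨rfl, hsize⟩
  · rw [grundyFormula_trim hc hcl ha.le, grundyFormula_eq_of_erase hc i]
    simp only [Set.mem_insert_iff, Set.mem_singleton_iff] at hd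
    exact starValue_ne_of_residue_ne (Nat.mod_lt _ (by norm_num)) (Nat.mod_lt _ (by norm_num))
      (by omega) _ _
  · rw [grundyFormula_of_none_notMem none_notMem_tail, hcl.isBranchInterval_tail.card_eq,
      grundyFormula_eq_of_erase hc i]
    exact (starValue_ne_of_small_remainder (residueCount_add_le_sum _ _) (sum_mod_three _ _)
      hsize ha).symm
  · rw [card_eq_add_sum_branchLen, if_pos hc] at hsize
    rw [grundyFormula_empty, grundyFormula, if_pos hc]
    simpa using (starValue_ne_of_small_remainder (residueCount_add_le_sum _ _)
      (sum_mod_three _ _) (by simpa using hsize) le_rfl (c := 0)).symm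

lemma csgMove_trim (hc : none ∈ s) (hcl : BranchClosed s) {d : ℕ}
    (hd : d ∈ ({1, 2, 4} : Set ℕ)) (hdc : d ≤ branchLen s i) :
    CsgMove (subdividedStar l) {1, 2, 4} s (trim s i (branchLen s i - d)) := by
  have hd0 : 0 < d := by simp only [Set.mem_insert_iff, Set.mem_singleton_iff] at hd; omega
  have hI := hcl.isBranchInterval_tail (i := i) (a := branchLen s i - d)
  refine csgMove_of_card_mem (by norm_num) trim_subset ?_ (hI.connOn (by omega))
    (Or.inr (hcl.trim.connOn (none_mem_trim.2 hc)))
  rwa [← tail, hI.card_eq, Nat.sub_sub_self hdc]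

lemma exists_csgMove_trim_eq (hc : none ∈ s) (hcl : BranchClosed s) {d : ℕ}
    (hd : d ∈ ({1, 2, 4} : Set ℕ)) (hdc : d ≤ branchLen s i) :
    ∃ u, CsgMove (subdividedStar l) {1, 2, 4} s u ∧ grundyFormula u =
      starValue (residueCount univ (branchLen s) 1 - (if branchLen s i % 3 = 1 then 1 else 0) +
          if (branchLen s i - d) % 3 = 1 then 1 else 0)
        (residueCount univ (branchLen s) 2 - (if branchLen s i % 3 = 2 then 1 else 0) +
          if (branchLen s i - d) % 3 = 2 then 1 else 0) := by
  refine ⟨_, csgMove_trim hc hcl hd hdc, ?_⟩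
  rw [grundyFormula_trim hc hcl (Nat.sub_le _ _), residueCount_eq_erase_add (mem_univ i) 1,
    residueCount_eq_erase_add (mem_univ i) 2, Nat.add_sub_cancel, Nat.add_sub_cancel]

lemma branchLen_le_one (hz : ¬∃ i, branchLen s i % 3 = 0 ∧ 0 < branchLen s i)
    (hbig : ¬∃ i, branchLen s i % 3 = 1 ∧ 4 ≤ branchLen s i)
    (h2 : residueCount univ (branchLen s) 2 = 0) (i : Fin t) : branchLen s i ≤ 1 := by
  have : branchLen s i % 3 ≠ 2 := fun h => (residueCount_pos (mem_univ i) h).ne' h2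
  have h0 : branchLen s i % 3 = 0 → branchLen s i = 0 := fun h =>
    Nat.eq_zero_of_not_pos fun hpos => hz ⟨i, h, hpos⟩
  have h1 : branchLen s i % 3 = 1 → branchLen s i < 4 := fun h =>
    not_le.1 fun hge => hbig ⟨i, h, hge⟩
  omega

lemma card_eq_of_branchLen_le_one (hc : none ∈ s) (h : ∀ i, branchLen s i ≤ 1) :
    s.card = 1 + (residueCount univ (branchLen s) 1 + 2 * residueCount univ (branchLen s) 2) := by
  rw [card_eq_add_sum_branchLen, if_pos hc, ← sum_mod_three_eq,
    sum_congr rfl fun i _ => Nat.mod_eq_of_lt (Nat.lt_of_le_of_lt (h i) (by norm_num : 1 < 3))]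

lemma exists_csgMove_eq_of_none_mem (hc : none ∈ s) (hcl : BranchClosed s) {w : ℕ}
    (hw : w < grundyFormula s) :
    ∃ u, CsgMove (subdividedStar l) {1, 2, 4} s u ∧ grundyFormula u = w := by
  rw [grundyFormula, if_pos hc] at hw
  rcases exists_starValue_eq_of_lt (decide (∃ i, branchLen s i % 3 = 0 ∧ 0 < branchLen s i)) hw
    with ⟨ha, rfl⟩ | ⟨hb, rfl⟩ | ⟨hb, rfl⟩ | ⟨hz, rfl⟩ | ⟨hz, rfl⟩ | ⟨ha, hb, hz, rfl⟩
  · obtain ⟨i, -, hi⟩ := exists_mod_three_eq_of_residueCount_ne_zero ha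
    obtain ⟨u, hu, hval⟩ := exists_csgMove_trim_eq hc hcl (i := i) (d := 1) (by simp) (by omega)
    exact ⟨u, hu, by rw [hval, show (branchLen s i - 1) % 3 = 0 by omega]; simp [hi]⟩
  · obtain ⟨i, -, hi⟩ := exists_mod_three_eq_of_residueCount_ne_zero hb
    obtain ⟨u, hu, hval⟩ := exists_csgMove_trim_eq hc hcl (i := i) (d := 1) (by simp) (by omega)
    exact ⟨u, hu, by rw [hval, show (branchLen s i - 1) % 3 = 1 by omega]; simp [hi]⟩
  · obtain ⟨i, -, hi⟩ := exists_mod_three_eq_of_residueCount_ne_zero hb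
    obtain ⟨u, hu, hval⟩ := exists_csgMove_trim_eq hc hcl (i := i) (d := 2) (by simp) (by omega)
    exact ⟨u, hu, by rw [hval, show (branchLen s i - 2) % 3 = 0 by omega]; simp [hi]⟩
  · obtain ⟨i, hi, hpos⟩ := of_decide_eq_true hz
    obtain ⟨u, hu, hval⟩ := exists_csgMove_trim_eq hc hcl (i := i) (d := 1) (by simp) (by omega)
    exact ⟨u, hu, by rw [hval, show (branchLen s i - 1) % 3 = 2 by omega]; simp [hi]⟩
  · obtain ⟨i, hi, hpos⟩ := of_decide_eq_true hz
    obtain ⟨u, hu, hval⟩ := exists_csgMove_trim_eq hc hcl (i := i) (d := 2) (by simp) (by omega)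
    exact ⟨u, hu, by rw [hval, show (branchLen s i - 2) % 3 = 1 by omega]; simp [hi]⟩
  by_cases hbig : ∃ i, branchLen s i % 3 = 1 ∧ 4 ≤ branchLen s i
  · obtain ⟨i, hi, hge⟩ := hbig
    have := residueCount_pos (mem_univ i) hi
    obtain ⟨u, hu, hval⟩ := exists_csgMove_trim_eq hc hcl (i := i) (d := 2) (by simp) (by omega)
    refine ⟨u, hu, ?_⟩
    rw [hval, show (branchLen s i - 2) % 3 = 2 by omega, hi, hb,
      show residueCount univ (branchLen s) 1 = 1 by omega]
    rfl
  · have hcard := card_eq_of_branchLen_le_one hc (branchLen_le_one (of_decide_eq_false hz) hbig hb)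
    refine ⟨∅, csgMove_empty (by norm_num) ?_ (hcl.connOn hc), rfl⟩
    simp only [Set.mem_insert_iff, Set.mem_singleton_iff]
    omega

lemma grundyFormula_ne_of_none_notMem (hn : none ∉ s)
    (hm : CsgMove (subdividedStar l) {1, 2, 4} s u) : grundyFormula u ≠ grundyFormula s := by
  obtain ⟨hsub, -, hcard, -⟩ := hm
  have hle := card_le_card (sdiff_subset (s := s) (t := u))
  rw [grundyFormula_of_none_notMem hn, grundyFormula_of_none_notMem fun h => hn (hsub h),
    ← card_sdiff_add_card_eq_card hsub]
  simp only [Set.mem_insert_iff, Set.mem_singleton_iff] at hcard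
  omega

lemma exists_csgMove_eq_of_none_notMem (hs : ConnOn (subdividedStar l) ↑s) (hn : none ∉ s)
    {w : ℕ} (hw : w < grundyFormula s) :
    ∃ u, CsgMove (subdividedStar l) {1, 2, 4} s u ∧ grundyFormula u = w := by
  rw [grundyFormula_of_none_notMem hn] at hw
  obtain ⟨i, a, b, hab, hI⟩ := exists_isBranchInterval_of_connOn hs hn
  have hcard := hI.card_eq
  set d := s.card % 3 - w
  have hR := hI.tail (m := b - d) (by omega)
  have hu := hI.trim (m := b - d) (by omega)
  refine ⟨trim s i (b - d), csgMove_of_card_mem (by norm_num) trim_subset ?_ (hR.connOn ?_) ?_, ?_⟩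
  · rw [← tail, hR.card_eq]
    simp only [Set.mem_insert_iff, Set.mem_singleton_iff]
    omega
  · omega
  · rcases Nat.lt_or_ge a (b - d) with h | h
    · exact Or.inr (hu.connOn h)
    · exact Or.inl (card_eq_zero.1 (by rw [hu.card_eq]; omega))
  · rw [grundyFormula_of_none_notMem hu.1, hu.card_eq]
    omega

theorem csgGrundy_eq_grundyFormula (s : Finset (StarVertex l))
    (hs : s = ∅ ∨ ConnOn (subdividedStar l) ↑s) :
    csgGrundy (subdividedStar l) {1, 2, 4} s = grundyFormula s := by
  refine csgGrundy_eq_of_forall _ _ (fun _ _ _ hm => hm.2.2.2.2) ?_ ?_ hs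
  · rintro s u (rfl | hs) hm
    · simp [CsgMove] at hm
    by_cases hc : none ∈ s
    · exact grundyFormula_ne_of_none_mem hc (branchClosed_of_connOn hs hc) hm
    · exact grundyFormula_ne_of_none_notMem hc hm
  · rintro s (rfl | hs) w hw
    · simp [grundyFormula_empty] at hw
    by_cases hc : none ∈ s
    · exact exists_csgMove_eq_of_none_mem hc (branchClosed_of_connOn hs hc) hw
    · exact exists_csgMove_eq_of_none_notMem hs hc hw

lemma branchDepths_univ (i : Fin t) :
    branchDepths (univ : Finset (StarVertex l)) i = range (l i) := by
  ext m
  simp only [mem_branchDepths, mem_univ, and_true, mem_range]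
  exact ⟨fun ⟨j, hj⟩ => hj ▸ j.2, fun h => ⟨⟨m, h⟩, rfl⟩⟩

lemma csgGrundy_subdividedStar (l : Fin t → ℕ) :
    csgGrundy (subdividedStar l) {1, 2, 4} univ =
      starValue (residueCount univ l 1) (residueCount univ l 2) := by
  have hlen : ∀ i, branchLen (univ : Finset (StarVertex l)) i = l i := fun i => by
    rw [branchLen, branchDepths_univ, card_range]
  have hcl : BranchClosed (univ : Finset (StarVertex l)) := fun i => by
    rw [branchDepths_univ, coe_range]
    exact isLowerSet_Iio _
  rw [csgGrundy_eq_grundyFormula _ (Or.inr (hcl.connOn (mem_univ _))), grundyFormula,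
    if_pos (mem_univ _), residueCount_congr (fun i _ => hlen i),
    residueCount_congr (fun i _ => hlen i)]

lemma residueCount_snoc (l : Fin t → ℕ) (x r : ℕ) :
    residueCount univ (Fin.snoc l x : Fin (t + 1) → ℕ) r =
      residueCount univ l r + if x % 3 = r then 1 else 0 := by
  simp only [residueCount, card_filter, Fin.sum_univ_castSucc, Fin.snoc_castSucc, Fin.snoc_last]

end CsgStar

/-- For CSG({1,2,4}) on subdivided stars, appending 3 extra vertices to a
branch does not change the Grundy value. -/
theorem stmt19 (t m : ℕ) (l : Fin t → ℕ) :
    csgGrundy (subdividedStar (Fin.snoc l (m + 3))) ({1, 2, 4} : Set ℕ)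
      Finset.univ =
    csgGrundy (subdividedStar (Fin.snoc l m)) ({1, 2, 4} : Set ℕ)
      Finset.univ := by
  simp only [CsgStar.csgGrundy_subdividedStar, CsgStar.residueCount_snoc, Nat.add_mod_right]
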